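/- arXiv:1208.3013 — 4 statements merged into one kernel-verified Lean document; each statement's English description precedes it below -/
import Mathlib

section
/- Backward invariance of the bullet regions: there exists ε₀ ∈ (0,1) such that for every ε ∈ (0,ε₀], every integer γ ≥ 1, and every point (x,y) ∈ Δ_ε in the domain of F, if F(x,y) ∈ B_γ then (x,y) ∈ B_γ. -/
open Filter Topology

/-- The Migdal–Kadanoff renormalization map in affine coordinates centered at the
superattracting fixed point `β = [1:0:0]`. -/
noncomputable def Fmk (p : ℂ × ℂ) : ℂ × ℂ :=
  (p.1 ^ 2 * ((p.1 + 2 * p.2) / (1 + p.2 ^ 2)) ^ 2,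
   p.2 ^ 2 * ((1 + (p.1 + p.2) ^ 2) / (1 + p.2 ^ 2)) ^ 2)

/-- The open bidisk `Δ_ε`. -/
def Bidisk (ε : ℝ) : Set (ℂ × ℂ) := {p | ‖p.1‖ < ε ∧ ‖p.2‖ < ε}

/-- The closed bidisk `Δ̄_ε`. -/
def ClosedBidisk (ε : ℝ) : Set (ℂ × ℂ) := {p | ‖p.1‖ ≤ ε ∧ ‖p.2‖ ≤ ε}

/-- The "bullet" region `B_γ = {|x| ≥ |y|^γ}`. -/
def Bullet (γ : ℕ) : Set (ℂ × ℂ) := {p | ‖p.2‖ ^ γ ≤ ‖p.1‖}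

/-- The horizontal cone `K^h = {|y| ≤ |x|}`. -/
def Khor : Set (ℂ × ℂ) := {p | ‖p.2‖ ≤ ‖p.1‖}

/-- The vertical cone `K^v = {|y| ≥ |x|}`. -/
def Kver : Set (ℂ × ℂ) := {p | ‖p.1‖ ≤ ‖p.2‖}

/-!
Write `F = (x² r², y² s²)` with `r = (x + 2y)/(1 + y²)` and `s = (1 + (x + y)²)/(1 + y²)`.
Suppose `|x| < |y|^γ` with `|y| < 1/10`. Then `|x| ≤ |y|` and so `|r| ≤ 1/3`, whence
`|F₁| < |y|^{2γ}/9`. Since `s = 1 + x r`, we get `|s| ≥ 1 - |x|/3`, and Bernoulli's inequality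
together with `γ |y|^γ ≤ 1` gives `|s|^{2γ} ≥ 1/3`, whence `|F₂|^γ ≥ |y|^{2γ}/3 > |F₁|`.
-/

lemma natCast_mul_pow_le_one {b : ℝ} (hb0 : 0 ≤ b) (hb : b ≤ 1 / 2) (n : ℕ) :
    (n : ℝ) * b ^ n ≤ 1 :=
  calc (n : ℝ) * b ^ n ≤ 2 ^ n * (1 / 2) ^ n := by
        gcongr
        exact_mod_cast n.lt_two_pow_self.le
    _ = 1 := by rw [← mul_pow]; norm_num

lemma one_sub_norm_sq_le_norm_one_add_sq (y : ℂ) : 1 - ‖y‖ ^ 2 ≤ ‖1 + y ^ 2‖ := by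
  have h := norm_sub_norm_le 1 (-(y ^ 2))
  rwa [norm_one, norm_neg, norm_pow, sub_neg_eq_add] at h

lemma norm_add_two_mul_div_le_third {x y : ℂ} (hxy : ‖x‖ ≤ ‖y‖) (hy : ‖y‖ < 1 / 10) :
    ‖x + 2 * y‖ / ‖1 + y ^ 2‖ ≤ 1 / 3 := by
  have hnum : ‖x + 2 * y‖ ≤ 3 * ‖y‖ :=
    calc ‖x + 2 * y‖ ≤ ‖x‖ + ‖2 * y‖ := norm_add_le _ _
      _ ≤ 3 * ‖y‖ := by rw [norm_mul, Complex.norm_two]; linarith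
  have hden := one_sub_norm_sq_le_norm_one_add_sq y
  have hy0 := norm_nonneg y
  rw [div_le_iff₀ (by nlinarith)]
  nlinarith

lemma one_sub_mul_le_norm_div (x : ℂ) {y : ℂ} (hy : 1 + y ^ 2 ≠ 0) :
    1 - ‖x‖ * (‖x + 2 * y‖ / ‖1 + y ^ 2‖) ≤ ‖1 + (x + y) ^ 2‖ / ‖1 + y ^ 2‖ := by
  have hD : 0 < ‖1 + y ^ 2‖ := norm_pos_iff.mpr hy
  have key : 1 + (x + y) ^ 2 = (1 + y ^ 2) + x * (x + 2 * y) := by ring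
  have h := norm_sub_norm_le (1 + y ^ 2) (-(x * (x + 2 * y)))
  rw [sub_neg_eq_add, ← key, norm_neg, norm_mul] at h
  rw [le_div_iff₀ hD, sub_mul, one_mul, mul_div_assoc', div_mul_cancel₀ _ hD.ne']
  linarith

lemma norm_Fmk_fst (x y : ℂ) :
    ‖(Fmk (x, y)).1‖ = ‖x‖ ^ 2 * (‖x + 2 * y‖ / ‖1 + y ^ 2‖) ^ 2 := by
  simp only [Fmk, norm_mul, norm_pow, norm_div]

lemma norm_Fmk_snd (x y : ℂ) :
    ‖(Fmk (x, y)).2‖ = ‖y‖ ^ 2 * (‖1 + (x + y) ^ 2‖ / ‖1 + y ^ 2‖) ^ 2 := by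
  simp only [Fmk, norm_mul, norm_pow, norm_div]

lemma norm_Fmk_fst_lt_norm_Fmk_snd_pow {x y : ℂ} {γ : ℕ} (hγ : 1 ≤ γ) (hy : ‖y‖ < 1 / 10)
    (hy2 : 1 + y ^ 2 ≠ 0) (hxy : ‖x‖ < ‖y‖ ^ γ) :
    ‖(Fmk (x, y)).1‖ < ‖(Fmk (x, y)).2‖ ^ γ := by
  set r := ‖x + 2 * y‖ / ‖1 + y ^ 2‖
  set s := ‖1 + (x + y) ^ 2‖ / ‖1 + y ^ 2‖
  have hx0 := norm_nonneg x
  have hy0 := norm_nonneg y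
  have hyγ : ‖y‖ ^ γ ≤ ‖y‖ := pow_le_of_le_one hy0 (by linarith) (by omega)
  have hr : r ≤ 1 / 3 := norm_add_two_mul_div_le_third (by linarith) hy
  have hs : 1 - ‖x‖ / 3 ≤ s := by
    have := one_sub_mul_le_norm_div x hy2
    nlinarith [div_nonneg (norm_nonneg (x + 2 * y)) (norm_nonneg (1 + y ^ 2))]
  have hγx : (γ : ℝ) * ‖x‖ ≤ 1 :=
    le_trans (by gcongr) (natCast_mul_pow_le_one hy0 (by linarith) γ)
  have hs2γ : 1 / 3 ≤ s ^ (2 * γ) := by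
    have := one_add_mul_sub_le_pow (a := s) (by linarith) (2 * γ)
    push_cast at this
    nlinarith
  have hx2 : ‖x‖ ^ 2 < ‖y‖ ^ (2 * γ) := by
    rw [pow_mul']; exact pow_lt_pow_left₀ hxy hx0 two_ne_zero
  calc ‖(Fmk (x, y)).1‖ = ‖x‖ ^ 2 * r ^ 2 := norm_Fmk_fst x y
    _ ≤ ‖x‖ ^ 2 * (1 / 9) := by
        gcongr
        nlinarith [div_nonneg (norm_nonneg (x + 2 * y)) (norm_nonneg (1 + y ^ 2))]
    _ < ‖y‖ ^ (2 * γ) * (1 / 3) := by nlinarith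
    _ ≤ ‖y‖ ^ (2 * γ) * s ^ (2 * γ) := by gcongr
    _ = ‖(Fmk (x, y)).2‖ ^ γ := by rw [norm_Fmk_snd, mul_pow, ← pow_mul, ← pow_mul]

theorem bullets_backward_invariant :
    ∃ ε₀ : ℝ, 0 < ε₀ ∧ ε₀ < 1 ∧ ∀ ε : ℝ, 0 < ε → ε ≤ ε₀ →
      ∀ γ : ℕ, 1 ≤ γ → ∀ p ∈ Bidisk ε, 1 + p.2 ^ 2 ≠ 0 →
        Fmk p ∈ Bullet γ → p ∈ Bullet γ := by
  refine ⟨1 / 10, by norm_num, by norm_num, ?_⟩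
  rintro ε - hε γ hγ ⟨x, y⟩ ⟨-, hy⟩ hy2 hF
  by_contra hxy
  exact (norm_Fmk_fst_lt_norm_Fmk_snd_pow hγ (hy.trans_le hε) hy2 (not_le.mp hxy)).not_ge hF
end

section
/- There exists ε₀ ∈ (0,1) such that for every ε ∈ (0,ε₀], the bidisk Δ_ε is forward invariant under F and for every integer γ ≥ 1: the set of points p ∈ Δ_ε whose entire forward orbit lies in B_γ (i.e., Fⁿ(p) ∈ B_γ for all n ≥ 0) is exactly L₀ ∩ Δ_ε = {(x,0) : |x| < ε}. -/
/-!
On a bidisk of radius at most `1/36` the map satisfies `|x'| ≤ |x|² max(|x|, |y|)` and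
`|y|² ≤ 16 |y'|`. In `B_γ` we have `max(|x|, |y|)^γ ≤ |x|`, so `a = -log |x|` grows by a factor
at least `2 + 1/γ` per step, while `b = -log |y|` grows by a factor at most `2` up to an additive
constant. This is incompatible with the bullet condition `a ≤ γ b` along the whole orbit unless
`y = 0`; conversely `L₀` is invariant and contained in every `B_γ`.
-/

open Filter Topology

theorem exists_mul_lt_of_geom_growth {a b : ℕ → ℝ} {γ L : ℝ} (hγ : 0 < γ) (hL : 0 ≤ L)
    (ha0 : 0 < a 0) (ha : ∀ n, (2 * γ + 1) * a n ≤ γ * a (n + 1))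
    (hb : ∀ n, b (n + 1) ≤ 2 * b n + L) :
    ∃ n, γ * b n < a n := by
  by_contra! hab
  have ha_pos : ∀ n, 0 < a n := by
    intro n
    induction n with
    | zero => exact ha0
    | succ n ih =>
      have : 0 < γ * a (n + 1) := (by positivity : 0 < (2 * γ + 1) * a n).trans_le (ha n)
      exact pos_of_mul_pos_right this hγ.le
  have hbL_pos : ∀ n, 0 < γ * (b n + L) := fun n => by
    nlinarith [hab n, ha_pos n, mul_nonneg hγ.le hL]
  -- The ratio `a n / (γ (b n + L)) ≤ 1` grows geometrically with rate `(2γ + 1) / (2γ) > 1`.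
  set v : ℕ → ℝ := fun n => a n / (γ * (b n + L))
  have hc : 1 < (2 * γ + 1) / (2 * γ) := by rw [lt_div_iff₀ (by positivity)]; linarith
  have hv : ∀ n, (2 * γ + 1) / (2 * γ) * v n ≤ v (n + 1) := by
    intro n
    have hbL : γ * (b (n + 1) + L) ≤ 2 * (γ * (b n + L)) := by nlinarith [hb n]
    simp only [v]
    rw [div_mul_div_comm, div_le_div_iff₀ (by nlinarith [hbL_pos n]) (hbL_pos _)]
    calc (2 * γ + 1) * a n * (γ * (b (n + 1) + L))
        ≤ γ * a (n + 1) * (2 * (γ * (b n + L))) :=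
          mul_le_mul (ha n) hbL (hbL_pos _).le (mul_pos hγ (ha_pos _)).le
      _ = a (n + 1) * (2 * γ * (γ * (b n + L))) := by ring
  obtain ⟨n, hn⟩ := ((tendsto_atTop_of_geom_le (div_pos ha0 (hbL_pos 0)) hc hv).eventually_gt_atTop
    1).exists
  have : v n ≤ 1 := div_le_one_of_le₀ (by nlinarith [hab n, mul_nonneg hγ.le hL]) (hbL_pos n).le
  linarith

theorem exists_lt_pow_of_superquadratic {s t : ℕ → ℝ} {γ : ℕ} {C : ℝ} (hγ : γ ≠ 0) (hC : 1 ≤ C)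
    (ht0 : 0 < t 0) (hs1 : ∀ n, s n < 1)
    (hs : ∀ n, s (n + 1) ≤ s n ^ 2 * max (s n) (t n)) (ht : ∀ n, t n ^ 2 ≤ C * t (n + 1)) :
    ∃ n, s n < t n ^ γ := by
  by_contra! hst
  have ht_pos : ∀ n, 0 < t n := by
    intro n
    induction n with
    | zero => exact ht0
    | succ n ih => exact pos_of_mul_pos_right ((pow_pos ih 2).trans_le (ht n)) (by linarith)
  have hs_pos : ∀ n, 0 < s n := fun n => (pow_pos (ht_pos n) γ).trans_le (hst n)
  have hs_step : ∀ n, s (n + 1) ^ γ ≤ s n ^ (2 * γ + 1) := by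
    intro n
    have hmax : max (s n) (t n) ^ γ ≤ s n := by
      rcases max_choice (s n) (t n) with h | h <;> rw [h]
      · exact pow_le_of_le_one (hs_pos n).le (hs1 n).le hγ
      · exact hst n
    calc s (n + 1) ^ γ ≤ (s n ^ 2 * max (s n) (t n)) ^ γ :=
          pow_le_pow_left₀ (hs_pos _).le (hs n) γ
      _ = s n ^ (2 * γ) * max (s n) (t n) ^ γ := by rw [mul_pow, ← pow_mul]
      _ ≤ s n ^ (2 * γ) * s n := mul_le_mul_of_nonneg_left hmax (pow_nonneg (hs_pos n).le _)
      _ = s n ^ (2 * γ + 1) := (pow_succ _ _).symm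
  obtain ⟨n, hn⟩ := exists_mul_lt_of_geom_growth (a := fun n => -Real.log (s n))
    (b := fun n => -Real.log (t n)) (γ := γ) (L := Real.log C) (by positivity)
    (Real.log_nonneg hC) (neg_pos.2 (Real.log_neg (hs_pos 0) (hs1 0)))
    (fun n => by
      have h := Real.log_le_log (pow_pos (hs_pos _) _) (hs_step n)
      rw [Real.log_pow, Real.log_pow] at h
      push_cast at h
      linarith)
    (fun n => by
      have h := Real.log_le_log (pow_pos (ht_pos n) 2) (ht n)
      rw [Real.log_pow, Real.log_mul (by linarith) (ht_pos _).ne'] at h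
      push_cast at h
      linarith)
  have h := Real.log_le_log (pow_pos (ht_pos n) γ) (hst n)
  rw [Real.log_pow] at h
  linarith

theorem half_le_norm_one_add {z : ℂ} (hz : ‖z‖ ≤ 1 / 2) : 1 / 2 ≤ ‖1 + z‖ := by
  have h := norm_sub_norm_le (1 : ℂ) (-z)
  rw [norm_one, norm_neg, sub_neg_eq_add] at h
  linarith

theorem norm_one_add_le_two {z : ℂ} (hz : ‖z‖ ≤ 1) : ‖1 + z‖ ≤ 2 := by
  linarith [norm_add_le 1 z, norm_one (α := ℂ)]

theorem mapsTo_Fmk_snd_eq_zero : Set.MapsTo Fmk {p | p.2 = 0} {p | p.2 = 0} := by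
  intro p (hp : p.2 = 0)
  simp [Fmk, hp]

theorem mem_bullet_of_snd_eq_zero {γ : ℕ} {p : ℂ × ℂ} (hγ : γ ≠ 0) (hp : p.2 = 0) :
    p ∈ Bullet γ := by
  simp [Bullet, hp, hγ]

theorem norm_fst_Fmk (p : ℂ × ℂ) :
    ‖(Fmk p).1‖ = ‖p.1‖ ^ 2 * (‖p.1 + 2 * p.2‖ / ‖1 + p.2 ^ 2‖) ^ 2 := by
  simp only [Fmk, norm_mul, norm_pow, norm_div]

theorem norm_snd_Fmk (p : ℂ × ℂ) :
    ‖(Fmk p).2‖ = ‖p.2‖ ^ 2 * (‖1 + (p.1 + p.2) ^ 2‖ / ‖1 + p.2 ^ 2‖) ^ 2 := by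
  simp only [Fmk, norm_mul, norm_pow, norm_div]

section SmallBidisk

variable {ε : ℝ} {p : ℂ × ℂ}

theorem half_le_norm_one_add_snd_sq (hε : ε ≤ 1 / 36) (hp : p ∈ Bidisk ε) :
    1 / 2 ≤ ‖1 + p.2 ^ 2‖ :=
  half_le_norm_one_add (by rw [norm_pow]; nlinarith [norm_nonneg p.2, hp.2])

theorem norm_sq_fst_add_snd_le (hε : ε ≤ 1 / 36) (hp : p ∈ Bidisk ε) :
    ‖(p.1 + p.2) ^ 2‖ ≤ 1 / 2 := by
  have h : ‖p.1 + p.2‖ ≤ 1 / 18 := by linarith [norm_add_le p.1 p.2, hp.1, hp.2]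
  rw [norm_pow]
  nlinarith [norm_nonneg (p.1 + p.2)]

theorem norm_fst_Fmk_le (hε : ε ≤ 1 / 36) (hp : p ∈ Bidisk ε) :
    ‖(Fmk p).1‖ ≤ ‖p.1‖ ^ 2 * max ‖p.1‖ ‖p.2‖ := by
  set m := max ‖p.1‖ ‖p.2‖
  have hm : m < ε := max_lt hp.1 hp.2
  have hnum : ‖p.1 + 2 * p.2‖ ≤ 3 * m := by
    have := norm_add_le p.1 (2 * p.2)
    rw [norm_mul, Complex.norm_two] at this
    linarith [le_max_left ‖p.1‖ ‖p.2‖, le_max_right ‖p.1‖ ‖p.2‖]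
  have hquot : ‖p.1 + 2 * p.2‖ / ‖1 + p.2 ^ 2‖ ≤ 6 * m := by
    rw [div_le_iff₀ (by linarith [half_le_norm_one_add_snd_sq hε hp])]
    nlinarith [half_le_norm_one_add_snd_sq hε hp, norm_nonneg p.1, le_max_left ‖p.1‖ ‖p.2‖]
  rw [norm_fst_Fmk]
  gcongr
  calc (‖p.1 + 2 * p.2‖ / ‖1 + p.2 ^ 2‖) ^ 2 ≤ (6 * m) ^ 2 := by gcongr
    _ ≤ m := by nlinarith [(norm_nonneg p.1).trans (le_max_left ‖p.1‖ ‖p.2‖)]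

theorem norm_snd_Fmk_le (hε : ε ≤ 1 / 36) (hp : p ∈ Bidisk ε) :
    ‖(Fmk p).2‖ ≤ 16 * ‖p.2‖ ^ 2 := by
  have hquot : ‖1 + (p.1 + p.2) ^ 2‖ / ‖1 + p.2 ^ 2‖ ≤ 4 := by
    rw [div_le_iff₀ (by linarith [half_le_norm_one_add_snd_sq hε hp])]
    linarith [half_le_norm_one_add_snd_sq hε hp,
      norm_one_add_le_two ((norm_sq_fst_add_snd_le hε hp).trans (by norm_num))]
  rw [norm_snd_Fmk]
  nlinarith [pow_le_pow_left₀ (by positivity) hquot 2, sq_nonneg ‖p.2‖]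

theorem sq_norm_snd_le_Fmk (hε : ε ≤ 1 / 36) (hp : p ∈ Bidisk ε) :
    ‖p.2‖ ^ 2 ≤ 16 * ‖(Fmk p).2‖ := by
  have hden : ‖1 + p.2 ^ 2‖ ≤ 2 :=
    norm_one_add_le_two (by rw [norm_pow]; nlinarith [norm_nonneg p.2, hp.2])
  have hquot : 1 / 4 ≤ ‖1 + (p.1 + p.2) ^ 2‖ / ‖1 + p.2 ^ 2‖ := by
    rw [le_div_iff₀ (by linarith [half_le_norm_one_add_snd_sq hε hp])]
    linarith [half_le_norm_one_add (norm_sq_fst_add_snd_le hε hp)]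
  rw [norm_snd_Fmk]
  nlinarith [pow_le_pow_left₀ (by norm_num) hquot 2, sq_nonneg ‖p.2‖]

theorem mapsTo_Fmk_bidisk (hε : ε ≤ 1 / 36) : Set.MapsTo Fmk (Bidisk ε) (Bidisk ε) := by
  intro p hp
  have hm : max ‖p.1‖ ‖p.2‖ < ε := max_lt hp.1 hp.2
  constructor
  · calc ‖(Fmk p).1‖ ≤ ‖p.1‖ ^ 2 * max ‖p.1‖ ‖p.2‖ := norm_fst_Fmk_le hε hp
      _ ≤ 1 * max ‖p.1‖ ‖p.2‖ := by gcongr; nlinarith [norm_nonneg p.1, hp.1]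
      _ < ε := by linarith
  · nlinarith [norm_snd_Fmk_le hε hp, norm_nonneg p.2, hp.2]

theorem exists_iterate_Fmk_not_mem_bullet {γ : ℕ} (hγ : γ ≠ 0) (hε : ε ≤ 1 / 36)
    (hp : p ∈ Bidisk ε) (hy : p.2 ≠ 0) : ∃ n, Fmk^[n] p ∉ Bullet γ := by
  have horb : ∀ n, Fmk^[n] p ∈ Bidisk ε := fun n => (mapsTo_Fmk_bidisk hε).iterate n hp
  obtain ⟨n, hn⟩ := exists_lt_pow_of_superquadratic (s := fun n => ‖(Fmk^[n] p).1‖)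
    (t := fun n => ‖(Fmk^[n] p).2‖) hγ (by norm_num : (1 : ℝ) ≤ 16) (norm_pos_iff.2 hy)
    (fun n => (horb n).1.trans_le (hε.trans (by norm_num)))
    (fun n => by
      simpa only [Function.iterate_succ_apply'] using norm_fst_Fmk_le hε (horb n))
    (fun n => by
      simpa only [Function.iterate_succ_apply'] using sq_norm_snd_le_Fmk hε (horb n))
  exact ⟨n, not_le.2 hn⟩

end SmallBidisk

theorem backward_bullets_collapse_to_line :
    ∃ ε₀ : ℝ, 0 < ε₀ ∧ ε₀ < 1 ∧ ∀ ε : ℝ, 0 < ε → ε ≤ ε₀ →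
      (∀ p ∈ Bidisk ε, Fmk p ∈ Bidisk ε) ∧
      ∀ γ : ℕ, 1 ≤ γ →
        {p ∈ Bidisk ε | ∀ n : ℕ, Fmk^[n] p ∈ Bullet γ} =
          {p ∈ Bidisk ε | p.2 = 0} := by
  refine ⟨1 / 36, by norm_num, by norm_num, fun ε _ hε =>
    ⟨fun p hp => mapsTo_Fmk_bidisk hε hp, fun γ hγ => ?_⟩⟩
  have hγ0 : γ ≠ 0 := Nat.one_le_iff_ne_zero.1 hγ
  ext p
  refine ⟨fun ⟨hp, horb⟩ => ⟨hp, ?_⟩, fun ⟨hp, hy⟩ => ⟨hp, fun n => ?_⟩⟩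
  · by_contra hy
    obtain ⟨n, hn⟩ := exists_iterate_Fmk_not_mem_bullet hγ0 hε hp hy
    exact hn (horb n)
  · exact mem_bullet_of_snd_eq_zero hγ0 (mapsTo_Fmk_snd_eq_zero.iterate n hy)
end

section
/- There exists ε₀ ∈ (0,1) such that for every ε ∈ (0,ε₀] and every point p ∈ Δ_ε \ B₃, there exist points q ∈ K^h and q' ∈ K^v, both in the domain of F, with F(q) = p and F(q') = p. -/
open Filter Topology

/-!
Write `x = a²`, `y = b²` and `v = b / (1 + a)`. For both roots `±w` of `w² = v² + a (1 + v²)`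
the point `(w - v, v)` maps to `(x, y)`, because `(w - v)(w + v) = a (1 + v²)` and
`1 + w² = (1 + a)(1 + v²)`. Since `|w - v| + |w + v| ≥ 2|v|`, one sign gives `|w - v| ≥ |v|`,
a preimage in `K^h`. Choosing instead the sign with `|w + v| ≥ |v|` forces
`|w - v| = |a| |1 + v²| / |w + v| ≤ |v|`, a preimage in `K^v`: outside `B₃` we have
`|a| < |b|³`, negligible against `|v|² ≈ |b|²`.
-/

theorem fmk_sub_eq_of_sq_eq {v c w : ℂ} (a : ℂ) (hv : 1 + v ^ 2 ≠ 0) (hc : c = a * (1 + v ^ 2))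
    (hw : w ^ 2 = v ^ 2 + c) : Fmk (w - v, v) = (a ^ 2, ((1 + a) * v) ^ 2) := by
  have hsum : 1 + (w - v + v) ^ 2 = (1 + a) * (1 + v ^ 2) := by
    rw [sub_add_cancel, hw, hc]; ring
  have hprod : (w - v) * (w - v + 2 * v) = a * (1 + v ^ 2) := by
    linear_combination hw + hc
  simp only [Fmk, Prod.mk.injEq]
  constructor
  · rw [← mul_pow, mul_div_assoc', hprod, mul_div_cancel_right₀ _ hv]
  · rw [hsum, mul_div_cancel_right₀ _ hv]; ring

theorem le_norm_sub_or_le_norm_neg_sub {E : Type*} [SeminormedAddCommGroup E] [NormedSpace ℝ E]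
    (w v : E) : ‖v‖ ≤ ‖w - v‖ ∨ ‖v‖ ≤ ‖-w - v‖ := by
  by_contra! h
  have h2v : 2 * ‖v‖ ≤ ‖w - v‖ + ‖-w - v‖ := calc
    2 * ‖v‖ = ‖-(w - v) - (-w - v)‖ := by
      rw [← Real.norm_two, ← norm_smul, two_smul]; congr 1; abel
    _ ≤ ‖w - v‖ + ‖-w - v‖ := by simpa only [norm_neg] using norm_sub_le (-(w - v)) (-w - v)
  linarith [h.1, h.2]

theorem norm_le_of_norm_mul_le_sq {R : Type*} [SeminormedRing R] [NormMulClass R] {x y : R}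
    {r : ℝ} (hr : 0 < r) (hy : r ≤ ‖y‖) (h : ‖x * y‖ ≤ r ^ 2) : ‖x‖ ≤ r := by
  rw [norm_mul] at h
  refine le_of_mul_le_mul_right ?_ (hr.trans_le hy)
  nlinarith

theorem exists_fmk_sub_eq_of_norm_lt_pow_three {x y : ℂ} (hxy : ‖x‖ < ‖y‖ ^ 3)
    (hy : ‖y‖ < 1 / 100) :
    ∃ v c : ℂ, 0 < ‖v‖ ∧ 1 + v ^ 2 ≠ 0 ∧ ‖c‖ ≤ ‖v‖ ^ 2 ∧
      ∀ w, w ^ 2 = v ^ 2 + c → Fmk (w - v, v) = (x, y) := by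
  obtain ⟨a, rfl⟩ : ∃ a : ℂ, a ^ 2 = x := IsAlgClosed.exists_pow_nat_eq x two_pos
  obtain ⟨b, rfl⟩ : ∃ b : ℂ, b ^ 2 = y := IsAlgClosed.exists_pow_nat_eq y two_pos
  rw [norm_pow, norm_pow, ← pow_mul, mul_comm, pow_mul] at hxy
  rw [norm_pow] at hy
  have ha : ‖a‖ < ‖b‖ ^ 3 := lt_of_pow_lt_pow_left₀ 2 (by positivity) hxy
  have hb0 : 0 < ‖b‖ := (Odd.pow_pos_iff (by decide)).mp ((norm_nonneg a).trans_lt ha)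
  have hb_small : ‖b‖ < 1 / 10 := by nlinarith
  have h1a_lower : 1 / 2 ≤ ‖1 + a‖ := by
    linarith [norm_sub_le_norm_add 1 a, norm_one (α := ℂ), pow_le_pow_left₀ hb0.le hb_small.le 3]
  have h1a_upper : ‖1 + a‖ ≤ 2 := by
    linarith [norm_add_le 1 a, norm_one (α := ℂ), pow_le_pow_left₀ hb0.le hb_small.le 3]
  set v := b / (1 + a)
  have hbv : (1 + a) * v = b := mul_div_cancel₀ b (norm_pos_iff.mp (by linarith))
  have hv_norm : ‖1 + a‖ * ‖v‖ = ‖b‖ := by rw [← norm_mul, hbv]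
  have hv_lower : ‖b‖ / 2 ≤ ‖v‖ := by nlinarith [norm_nonneg v]
  have hv_upper : ‖v‖ ≤ 2 * ‖b‖ := by nlinarith [norm_nonneg v]
  have hv2_upper : ‖1 + v ^ 2‖ ≤ 2 := by
    nlinarith [norm_add_le 1 (v ^ 2), norm_one (α := ℂ), norm_pow v 2]
  have hv2 : 1 + v ^ 2 ≠ 0 := by
    intro h
    have : ‖v‖ ^ 2 = 1 := by rw [← norm_pow, eq_neg_of_add_eq_zero_right h, norm_neg, norm_one]
    nlinarith
  refine ⟨v, a * (1 + v ^ 2), by linarith, hv2, ?_, fun w hw => ?_⟩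
  · rw [norm_mul]
    nlinarith [norm_nonneg a]
  · rw [fmk_sub_eq_of_sq_eq a hv2 rfl hw, hbv]

theorem horizontal_and_vertical_preimages :
    ∃ ε₀ : ℝ, 0 < ε₀ ∧ ε₀ < 1 ∧ ∀ ε : ℝ, 0 < ε → ε ≤ ε₀ →
      ∀ p ∈ Bidisk ε \ Bullet 3,
        (∃ q ∈ Khor, 1 + q.2 ^ 2 ≠ 0 ∧ Fmk q = p) ∧
        (∃ q' ∈ Kver, 1 + q'.2 ^ 2 ≠ 0 ∧ Fmk q' = p) := by
  refine ⟨1 / 100, by norm_num, by norm_num, fun ε _ hε p ⟨⟨_, hy⟩, hp⟩ => ?_⟩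
  obtain ⟨v, c, hv0, hv, hc, hF⟩ :=
    exists_fmk_sub_eq_of_norm_lt_pow_three (not_le.mp hp) (hy.trans_le hε)
  obtain ⟨w, hw⟩ := IsAlgClosed.exists_pow_nat_eq (v ^ 2 + c) two_pos
  have hw' : (-w) ^ 2 = v ^ 2 + c := by rw [neg_sq, hw]
  constructor
  · rcases le_norm_sub_or_le_norm_neg_sub w v with h | h
    exacts [⟨(w - v, v), h, hv, hF w hw⟩, ⟨(-w - v, v), h, hv, hF (-w) hw'⟩]
  · have hvert : ∀ u, u ^ 2 = v ^ 2 + c → ‖-v‖ ≤ ‖u - -v‖ →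
        ∃ q' ∈ Kver, 1 + q'.2 ^ 2 ≠ 0 ∧ Fmk q' = p := by
      intro u hu h
      rw [norm_neg, sub_neg_eq_add] at h
      have hprod : (u - v) * (u + v) = c := by linear_combination hu
      exact ⟨(u - v, v), norm_le_of_norm_mul_le_sq hv0 h (hprod ▸ hc), hv, hF u hu⟩
    rcases le_norm_sub_or_le_norm_neg_sub w (-v) with h | h
    exacts [hvert w hw h, hvert (-w) hw' h]
end

section
/- There exists ε₀ ∈ (0,1) such that for every ε ∈ (0,ε₀] and every positive integer k, there exist σ > 0 and an integer γ ≥ 1 such that every point p ∈ Δ_σ \ B_γ has a preorbit of length at least k contained in K^v ∩ Δ_ε: there exist points q₁, …, q_k ∈ K^v ∩ Δ_ε with F(q₁) = p and F(q_{i+1}) = q_i for 1 ≤ i < k. -/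
open Filter Topology

/-!
Write `x = a²`, `y = b²`, put `v = b / (1 + a)` and let `w² = v² + a (1 + v²)`. Then
`(w - v)(w + v) = a (1 + v²)` and `1 + w² = (1 + a)(1 + v²)`, so `F (w - v, v) = (x, y)`.
If `|x| ≤ 4 |y|^(m+1)` with `y` small, then `|v| ≤ 2 √|y|`, and choosing the root `w` closer to `v`
gives `|w - v| ≤ 4 |v|^m`: the preimage lies in `K^v` and satisfies the same kind of bound with
exponent `m`. A point outside the bullet `B_(k+3)` can thus be pulled back `k` times, and by
induction on `k` a small enough `σ` keeps every pullback inside `Δ_ε`.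
-/
theorem Fmk_sub_eq {x y a b v w : ℂ} (ha : a ^ 2 = x) (hb : b ^ 2 = y) (hv : v * (1 + a) = b)
    (hw : w ^ 2 = v ^ 2 + a * (1 + v ^ 2)) (hv₁ : 1 + v ^ 2 ≠ 0) : Fmk (w - v, v) = (x, y) := by
  have h₁ : (w - v) * (w - v + 2 * v) = a * (1 + v ^ 2) := by linear_combination hw
  have h₂ : 1 + (w - v + v) ^ 2 = (1 + a) * (1 + v ^ 2) := by linear_combination hw
  simp only [Fmk, Prod.mk.injEq]
  constructor
  · rw [← mul_pow, ← mul_div_assoc, h₁, mul_div_cancel_right₀ a hv₁, ha]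
  · rw [h₂, mul_div_cancel_right₀ _ hv₁, ← mul_pow, hv, hb]

theorem exists_sq_eq_norm_sub_le_norm_add (z v : ℂ) : ∃ w : ℂ, w ^ 2 = z ∧ ‖w - v‖ ≤ ‖w + v‖ := by
  obtain ⟨w, hw⟩ := IsAlgClosed.exists_pow_nat_eq z two_pos
  rcases le_total ‖w - v‖ ‖w + v‖ with h | h
  · exact ⟨w, hw, h⟩
  · refine ⟨-w, by rw [neg_sq, hw], ?_⟩
    rwa [show -w - v = -(w + v) by ring, show -w + v = -(w - v) by ring, norm_neg, norm_neg]

theorem norm_sub_mul_norm_le_norm_sq_sub {w v : ℂ} (h : ‖w - v‖ ≤ ‖w + v‖) :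
    ‖w - v‖ * ‖v‖ ≤ ‖w ^ 2 - v ^ 2‖ := by
  have hv : ‖v‖ ≤ ‖w + v‖ := by
    have := norm_sub_le (w + v) (w - v)
    rw [show w + v - (w - v) = 2 * v by ring, norm_mul, Complex.norm_two] at this
    linarith
  rw [sq_sub_sq, norm_mul, mul_comm ‖w + v‖]
  exact mul_le_mul_of_nonneg_left hv (norm_nonneg _)

theorem one_add_pow_le_one_div_one_sub_mul {t : ℝ} (ht : 0 ≤ t) {n : ℕ} (hnt : n * t < 1) :
    (1 + t) ^ n ≤ 1 / (1 - n * t) :=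
  calc (1 + t) ^ n ≤ Real.exp t ^ n := by
        gcongr
        linarith [Real.add_one_le_exp t]
    _ = Real.exp (n * t) := (Real.exp_nat_mul t n).symm
    _ ≤ 1 / (1 - n * t) := Real.exp_bound_div_one_sub_of_interval (by positivity) hnt

theorem nat_mul_pow_le_half_pow {r : ℝ} (hr₀ : 0 ≤ r) (hr : r ≤ 1 / 4) (n : ℕ) :
    n * r ^ n ≤ (1 / 2) ^ n :=
  calc n * r ^ n ≤ 2 ^ n * (1 / 4) ^ n := by
        gcongr
        exact_mod_cast n.lt_two_pow_self.le
    _ = (1 / 2) ^ n := by rw [← mul_pow]; norm_num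

theorem le_mul_pow_of_le_one_add_mul {α β ν : ℝ} {n : ℕ} (hn : 3 ≤ n) (hα₀ : 0 ≤ α)
    (hβ₀ : 0 ≤ β) (hβ : β ≤ 1 / 4) (hαβ : α ≤ 2 * β ^ n) (hβν : β ≤ (1 + α) * ν) :
    α ≤ 8 / 3 * ν ^ n := by
  have hν : 0 ≤ ν := nonneg_of_mul_nonneg_right (hβ₀.trans hβν) (by positivity)
  have hnα : n * α ≤ 1 / 4 :=
    calc n * α ≤ 2 * (n * β ^ n) := by nlinarith
      _ ≤ 2 * (1 / 2) ^ 3 := by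
        gcongr
        exact (nat_mul_pow_le_half_pow hβ₀ hβ n).trans
          (pow_le_pow_of_le_one (by norm_num) (by norm_num) hn)
      _ = 1 / 4 := by norm_num
  have hpow : (1 + α) ^ n ≤ 4 / 3 :=
    (one_add_pow_le_one_div_one_sub_mul hα₀ (by linarith)).trans
      (by rw [div_le_div_iff₀ (by linarith) (by norm_num)]; linarith)
  calc α ≤ 2 * ((1 + α) * ν) ^ n := hαβ.trans (by gcongr)
    _ = 2 * (1 + α) ^ n * ν ^ n := by rw [mul_pow]; ring
    _ ≤ 2 * (4 / 3) * ν ^ n := by gcongr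
    _ = 8 / 3 * ν ^ n := by norm_num

theorem exists_mul_one_add_eq {a b : ℂ} (ha : ‖a‖ ≤ 1 / 2) (hb : b ≠ 0) :
    ∃ v : ℂ, v * (1 + a) = b ∧ v ≠ 0 ∧ ‖v‖ ≤ 2 * ‖b‖ ∧ ‖b‖ ≤ (1 + ‖a‖) * ‖v‖ := by
  have h1a : 1 / 2 ≤ ‖1 + a‖ := by
    have := norm_sub_norm_le (1 : ℂ) (-a)
    rw [norm_one, norm_neg, sub_neg_eq_add] at this
    linarith
  have h1a₀ : 1 + a ≠ 0 := norm_pos_iff.1 (by linarith)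
  refine ⟨b / (1 + a), div_mul_cancel₀ b h1a₀, div_ne_zero hb h1a₀, ?_, ?_⟩
  · rw [norm_div, div_le_iff₀ (by linarith)]
    nlinarith [norm_nonneg b]
  · rw [norm_div, mul_div_assoc', le_div_iff₀ (by linarith), mul_comm]
    gcongr
    exact (norm_add_le 1 a).trans_eq (by rw [norm_one])

theorem exists_Fmk_eq_of_norm_le_pow {m : ℕ} (hm : 2 ≤ m) {x y : ℂ} (hy₀ : y ≠ 0)
    (hy : ‖y‖ ≤ 1 / 16) (hx : ‖x‖ ≤ 4 * ‖y‖ ^ (m + 1)) :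
    ∃ u v : ℂ, Fmk (u, v) = (x, y) ∧ v ≠ 0 ∧ ‖v‖ ≤ 2 * √‖y‖ ∧ ‖u‖ ≤ 4 * ‖v‖ ^ m := by
  obtain ⟨a, rfl⟩ := IsAlgClosed.exists_pow_nat_eq x two_pos
  obtain ⟨b, rfl⟩ := IsAlgClosed.exists_pow_nat_eq y two_pos
  rw [norm_pow, norm_pow, show 4 * (‖b‖ ^ 2) ^ (m + 1) = (2 * ‖b‖ ^ (m + 1)) ^ 2 by ring] at hx
  rw [norm_pow] at hy
  rw [norm_pow, Real.sqrt_sq (norm_nonneg b)]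
  have ha : ‖a‖ ≤ 2 * ‖b‖ ^ (m + 1) :=
    (pow_le_pow_iff_left₀ (norm_nonneg a) (by positivity) two_ne_zero).1 hx
  have hb : ‖b‖ ≤ 1 / 4 :=
    (pow_le_pow_iff_left₀ (norm_nonneg b) (by norm_num) two_ne_zero).1 (by linarith)
  have ha_half : ‖a‖ ≤ 1 / 2 := by
    have := pow_le_of_le_one (norm_nonneg b) (hb.trans (by norm_num)) (by omega : m + 1 ≠ 0)
    linarith
  have hb₀ : b ≠ 0 := by rintro rfl; simp at hy₀
  obtain ⟨v, hv_mul, hv₀, hv, hbv⟩ := exists_mul_one_add_eq ha_half hb₀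
  have hv1 : ‖1 + v ^ 2‖ ≤ 5 / 4 := by
    refine (norm_add_le _ _).trans ?_
    rw [norm_one, norm_pow]
    nlinarith [norm_nonneg v]
  have hv1₀ : 1 + v ^ 2 ≠ 0 := by
    intro h
    have : ‖v‖ ^ 2 = 1 := by rw [← norm_pow, eq_neg_of_add_eq_zero_right h, norm_neg, norm_one]
    nlinarith [norm_nonneg v]
  obtain ⟨w, hw, hwv⟩ := exists_sq_eq_norm_sub_le_norm_add (v ^ 2 + a * (1 + v ^ 2)) v
  refine ⟨w - v, v, Fmk_sub_eq rfl rfl hv_mul hw hv1₀, hv₀, hv, ?_⟩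
  have hav : ‖a‖ ≤ 8 / 3 * ‖v‖ ^ (m + 1) :=
    le_mul_pow_of_le_one_add_mul (by omega) (norm_nonneg a) (norm_nonneg b) hb ha hbv
  have hvpos : 0 < ‖v‖ := norm_pos_iff.2 hv₀
  refine le_of_mul_le_mul_right ?_ hvpos
  calc ‖w - v‖ * ‖v‖ ≤ ‖a‖ * ‖1 + v ^ 2‖ :=
        (norm_sub_mul_norm_le_norm_sq_sub hwv).trans_eq (by rw [hw, add_sub_cancel_left, norm_mul])
    _ ≤ 8 / 3 * ‖v‖ ^ (m + 1) * (5 / 4) := by gcongr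
    _ ≤ 4 * ‖v‖ ^ m * ‖v‖ := by rw [pow_succ]; nlinarith [pow_nonneg hvpos.le m]

def HasPreorbitIn {α : Type*} (f : α → α) (S : Set α) (k : ℕ) (p : α) : Prop :=
  ∃ q : ℕ → α, q 0 = p ∧ ∀ i < k, q (i + 1) ∈ S ∧ f (q (i + 1)) = q i

namespace HasPreorbitIn

variable {α : Type*} {f : α → α} {S : Set α} {k : ℕ} {p r : α}

theorem zero (f : α → α) (S : Set α) (p : α) : HasPreorbitIn f S 0 p :=
  ⟨fun _ => p, rfl, fun _ hi => absurd hi (Nat.not_lt_zero _)⟩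

theorem succ (hr : r ∈ S) (hrp : f r = p) (h : HasPreorbitIn f S k r) :
    HasPreorbitIn f S (k + 1) p := by
  obtain ⟨q, rfl, hq⟩ := h
  refine ⟨fun | 0 => p | i + 1 => q i, rfl, fun i hi => ?_⟩
  rcases i with _ | i
  · exact ⟨hr, hrp⟩
  · exact hq i (by omega)

end HasPreorbitIn

theorem mem_Kver_inter_Bidisk {u v : ℂ} {m : ℕ} {ε : ℝ} (hm : 2 ≤ m) (hu : ‖u‖ ≤ 4 * ‖v‖ ^ m)
    (hv : ‖v‖ ≤ 1 / 4) (hvε : ‖v‖ < ε) : (u, v) ∈ Kver ∩ Bidisk ε := by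
  have huv : ‖u‖ ≤ ‖v‖ :=
    calc ‖u‖ ≤ 4 * ‖v‖ ^ m := hu
      _ ≤ 4 * ‖v‖ ^ 2 := by
        have := pow_le_pow_of_le_one (norm_nonneg v) (by linarith) hm
        linarith
      _ ≤ ‖v‖ := by nlinarith [norm_nonneg v]
  exact ⟨huv, huv.trans_lt hvε, hvε⟩

theorem exists_pos_hasPreorbitIn {ε : ℝ} (hε : 0 < ε) (k : ℕ) :
    ∃ σ > 0, ∀ x y : ℂ, y ≠ 0 → ‖y‖ < σ → ‖x‖ ≤ 4 * ‖y‖ ^ (k + 3) →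
      HasPreorbitIn Fmk (Kver ∩ Bidisk ε) k (x, y) := by
  induction k with
  | zero => exact ⟨1, one_pos, fun x y _ _ _ => .zero _ _ _⟩
  | succ k ih =>
    obtain ⟨σ, hσ, hpre⟩ := ih
    set s := min (min σ ε) (1 / 4)
    have hs : 0 < s := lt_min (lt_min hσ hε) (by norm_num)
    refine ⟨(s / 2) ^ 2, by positivity, fun x y hy₀ hy hx => ?_⟩
    have hs4 : s ≤ 1 / 4 := min_le_right _ _
    obtain ⟨u, v, huv, hv₀, hv, hu⟩ :=
      exists_Fmk_eq_of_norm_le_pow (m := k + 3) (by omega) hy₀ (by nlinarith) hx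
    have hvs : ‖v‖ < s := by
      have := (Real.sqrt_lt' (by positivity)).2 hy
      linarith
    exact .succ (mem_Kver_inter_Bidisk (by omega) hu (by linarith)
      (hvs.trans_le ((min_le_left _ _).trans (min_le_right _ _))))
      huv (hpre u v hv₀ (hvs.trans_le ((min_le_left _ _).trans (min_le_left _ _))) hu)

theorem nested_bullets_vertical_preorbits :
    ∃ ε₀ : ℝ, 0 < ε₀ ∧ ε₀ < 1 ∧ ∀ ε : ℝ, 0 < ε → ε ≤ ε₀ →
      ∀ k : ℕ, 0 < k → ∃ σ : ℝ, 0 < σ ∧ ∃ γ : ℕ, 1 ≤ γ ∧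
        ∀ p ∈ Bidisk σ \ Bullet γ, ∃ q : ℕ → ℂ × ℂ,
          (∀ i : ℕ, 1 ≤ i → i ≤ k → q i ∈ Kver ∩ Bidisk ε) ∧
          Fmk (q 1) = p ∧
          (∀ i : ℕ, 1 ≤ i → i < k → Fmk (q (i + 1)) = q i) := by
  refine ⟨1 / 2, by norm_num, by norm_num, fun ε hε _ k hk => ?_⟩
  obtain ⟨σ, hσ, hpre⟩ := exists_pos_hasPreorbitIn hε k
  refine ⟨σ, hσ, k + 3, by omega, ?_⟩
  rintro ⟨x, y⟩ ⟨⟨-, hy⟩, hxy⟩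
  replace hxy : ‖x‖ < ‖y‖ ^ (k + 3) := not_le.1 hxy
  have hy₀ : y ≠ 0 := by
    rintro rfl
    rw [norm_zero, zero_pow (by omega)] at hxy
    exact (norm_nonneg x).not_gt hxy
  obtain ⟨q, hq₀, hq⟩ := hpre x y hy₀ hy (by nlinarith [norm_nonneg x])
  refine ⟨q, fun i hi hik => ?_, hq₀ ▸ (hq 0 hk).2, fun i _ hik => (hq i hik).2⟩
  obtain ⟨j, rfl⟩ := Nat.exists_eq_add_of_le' hi
  exact (hq j (by omega)).1
end
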